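/- arXiv:2005.05697 — 4 statements merged into one kernel-verified Lean document; each statement's English description precedes it below -/
import Mathlib

section
/- Let Γ be a countable discrete group and ρ : Γ ↷ (X,ν) a measure-class-preserving measurable action on a probability space (X,ν). Then ρ is strongly ergodic if and only if ρ is asymptotically expanding in measure, i.e., for every α ∈ (0,1/2] there exist a constant c(α) > 0 and a finite subset S(α) ⊆ Γ such that ν(⋃_{s∈S(α)} s·A) > (1+c(α))·ν(A) for every measurable subset A ⊆ X with α ≤ ν(A) ≤ 1/2. -/
/-!
If expansion fails at some level `α`, there are sets `C n` with `α ≤ ν(C n) ≤ 1/2` and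
`ν(S n · C n) ≤ (1 + 1/(n+1)) ν(C n)` for finite sets `S n ∋ 1` exhausting `Γ`, so
`ν(γ • C n \ C n) → 0` for every `γ`. Since translation by `γ` is absolutely continuous with
respect to the finite measure `ν`, it maps asymptotically null sets to asymptotically null sets,
whence also `ν(C n \ γ • C n) = ν(γ • (γ⁻¹ • C n \ C n)) → 0`. Thus `(C n)` is almost invariant
while `ν(C n)(1 - ν(C n)) ≥ α/2`, against strong ergodicity.

Conversely, for an almost invariant sequence let `D` be `C n` or its complement, whichever has
measure at most `1/2`. Its boundary satisfies `ν(S·D \ D) ≤ ∑_{s ∈ S} ν(C n ∆ s • C n) → 0`, so the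
`(α, c, S)`-expansion estimate eventually forces `ν(D) < α`.
-/

open MeasureTheory Set Filter Pointwise

/-- The union `S · A = ⋃ s ∈ S, s • A` of the translates of `A` by elements of the
finite set `S ⊆ Γ`. -/
def finSMul {Γ X : Type*} [Group Γ] [MulAction Γ X] (S : Finset Γ) (A : Set X) : Set X :=
  ⋃ s ∈ S, s • A

/-- `S` is a finite symmetric subset of `Γ` containing the identity. -/
def SymmFin {Γ : Type*} [Group Γ] (S : Finset Γ) : Prop :=
  (1 : Γ) ∈ S ∧ ∀ s ∈ S, s⁻¹ ∈ S

/-- The `S`-boundary `∂_S A = (S·A) \ A`. -/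
def finBdry {Γ X : Type*} [Group Γ] [MulAction Γ X] (S : Finset Γ) (A : Set X) : Set X :=
  finSMul S A \ A

/-- `Y` is a domain of `(c,S)`-expansion: `ν((S·A) ∩ Y) > (1+c)·ν(A)` for every
measurable `A ⊆ Y` with `0 < ν(A) ≤ ν(Y)/2`. -/
def ExpandsOn {Γ X : Type*} [Group Γ] [MulAction Γ X] [MeasurableSpace X]
    (ν : MeasureTheory.Measure X) (Y : Set X) (c : ℝ) (S : Finset Γ) : Prop :=
  ∀ A : Set X, MeasurableSet A → A ⊆ Y → 0 < ν A → ν A ≤ ν Y / 2 →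
    (1 + ENNReal.ofReal c) * ν A < ν (finSMul S A ∩ Y)

/-- `Y` is a domain of expansion: `(c,S)`-expansion for some `c > 0` and some finite
symmetric `S ∋ 1`. -/
def ExpDomain (Γ : Type*) {X : Type*} [Group Γ] [MulAction Γ X] [MeasurableSpace X]
    (ν : MeasureTheory.Measure X) (Y : Set X) : Prop :=
  ∃ c : ℝ, 0 < c ∧ ∃ S : Finset Γ, SymmFin S ∧ ExpandsOn ν Y c S

/-- The `(α,c,S)` asymptotic-expansion estimate on `Y`: `ν((S·A) ∩ Y) > (1+c)·ν(A)` for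
every measurable `A ⊆ Y` with `α·ν(Y) ≤ ν(A) ≤ ν(Y)/2`. -/
def AsymExpandsOn {Γ X : Type*} [Group Γ] [MulAction Γ X] [MeasurableSpace X]
    (ν : MeasureTheory.Measure X) (Y : Set X) (α c : ℝ) (S : Finset Γ) : Prop :=
  ∀ A : Set X, MeasurableSet A → A ⊆ Y → ENNReal.ofReal α * ν Y ≤ ν A → ν A ≤ ν Y / 2 →
    (1 + ENNReal.ofReal c) * ν A < ν (finSMul S A ∩ Y)

/-- `Y` is a domain of asymptotic expansion. -/
def AsymExpDomain (Γ : Type*) {X : Type*} [Group Γ] [MulAction Γ X] [MeasurableSpace X]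
    (ν : MeasureTheory.Measure X) (Y : Set X) : Prop :=
  ∀ α : ℝ, 0 < α → α ≤ 1 / 2 →
    ∃ c : ℝ, 0 < c ∧ ∃ S : Finset Γ, SymmFin S ∧ AsymExpandsOn ν Y α c S

/-- The action of `Γ` on the probability space `(X,ν)` is strongly ergodic: every almost
invariant sequence of measurable sets is asymptotically trivial. -/
def StronglyErgodic (Γ : Type*) {X : Type*} [Group Γ] [MulAction Γ X] [MeasurableSpace X]
    (ν : MeasureTheory.Measure X) : Prop :=
  ∀ C : ℕ → Set X, (∀ n, MeasurableSet (C n)) →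
    (∀ γ : Γ, Filter.Tendsto (fun n => ν (symmDiff (C n) (γ • C n))) Filter.atTop (nhds 0)) →
    Filter.Tendsto (fun n => ν (C n) * (1 - ν (C n))) Filter.atTop (nhds 0)

/-- The action of `Γ` on `(X,ν)` is measure-class-preserving. -/
def MeasClassPres (Γ : Type*) {X : Type*} [Group Γ] [MulAction Γ X] [MeasurableSpace X]
    (ν : MeasureTheory.Measure X) : Prop :=
  ∀ (γ : Γ) (A : Set X), MeasurableSet A → (ν (γ • A) = 0 ↔ ν A = 0)

/-- The action of `Γ` on `(X,ν)` is ergodic: every invariant measurable set is null or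
conull. -/
def ErgodicAct (Γ : Type*) {X : Type*} [Group Γ] [MulAction Γ X] [MeasurableSpace X]
    (ν : MeasureTheory.Measure X) : Prop :=
  ∀ A : Set X, MeasurableSet A → (∀ γ : Γ, γ • A = A) → ν A = 0 ∨ ν Aᶜ = 0

/-- `W` admits an exhaustion by measurable subsets satisfying `P`. -/
def ExhaustionBy {X : Type*} [MeasurableSpace X] (ν : MeasureTheory.Measure X)
    (W : Set X) (P : Set X → Prop) : Prop :=
  ∃ Y : ℕ → Set X, Monotone Y ∧ (∀ n, MeasurableSet (Y n)) ∧ (∀ n, Y n ⊆ W) ∧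
    (∀ n, P (Y n)) ∧ ν (W \ ⋃ n, Y n) = 0

open scoped ENNReal Topology symmDiff

def IsExpandingAt {Γ X : Type*} [Group Γ] [MulAction Γ X] [MeasurableSpace X]
    (ν : Measure X) (α c : ℝ) (S : Finset Γ) : Prop :=
  ∀ A : Set X, MeasurableSet A → ENNReal.ofReal α ≤ ν A → ν A ≤ 1 / 2 →
    (1 + ENNReal.ofReal c) * ν A < ν (finSMul S A)

theorem MeasureTheory.Measure.AbsolutelyContinuous.tendsto_measure_nhds_zero {α ι : Type*}
    [MeasurableSpace α] {μ ν : Measure α} [IsFiniteMeasure μ] [SigmaFinite ν] (h : μ ≪ ν)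
    {l : Filter ι} {s : ι → Set α} (hs : Tendsto (ν ∘ s) l (𝓝 0)) :
    Tendsto (μ ∘ s) l (𝓝 0) := by
  rw [← Measure.withDensity_rnDeriv_eq μ ν h]
  simpa only [Function.comp_def, withDensity_apply'] using
    tendsto_setLIntegral_zero (Measure.lintegral_rnDeriv_lt_top μ ν).ne hs

section Translates

variable {Γ X : Type*} [Group Γ] [MulAction Γ X]

theorem smul_subset_finSMul {S : Finset Γ} {γ : Γ} (hγ : γ ∈ S) (A : Set X) :
    γ • A ⊆ finSMul S A :=
  subset_biUnion_of_mem (u := fun s => s • A) hγ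

theorem subset_finSMul {S : Finset Γ} (hS : 1 ∈ S) (A : Set X) : A ⊆ finSMul S A := by
  simpa only [one_smul] using smul_subset_finSMul hS A

theorem finSMul_sdiff (S : Finset Γ) (A : Set X) :
    finSMul S A \ A = ⋃ s ∈ S, s • A \ A := by
  simp only [finSMul, iUnion_sdiff]

variable [MeasurableSpace X] {ν : Measure X}

theorem measure_finSMul_sdiff_le_sum (S : Finset Γ) (A : Set X) :
    ν (finSMul S A \ A) ≤ ∑ s ∈ S, ν (A ∆ (s • A)) :=
  calc ν (finSMul S A \ A) ≤ ν (⋃ s ∈ S, s • A \ A) := by rw [finSMul_sdiff]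
    _ ≤ ∑ s ∈ S, ν (s • A \ A) := measure_biUnion_finset_le S _
    _ ≤ ∑ s ∈ S, ν (A ∆ (s • A)) :=
        Finset.sum_le_sum fun s _ => measure_mono (by rw [symmDiff_def]; exact le_sup_right)

theorem measure_smul_sdiff_le_of_measure_finSMul_le {S : Finset Γ} (hS : 1 ∈ S) {γ : Γ}
    (hγ : γ ∈ S) {A : Set X} (hA : NullMeasurableSet A ν) (hνA : ν A ≠ ∞) {c : ℝ≥0∞}
    (h : ν (finSMul S A) ≤ (1 + c) * ν A) : ν (γ • A \ A) ≤ c * ν A :=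
  calc ν (γ • A \ A) ≤ ν (finSMul S A \ A) :=
        measure_mono (sdiff_subset_sdiff_left (smul_subset_finSMul hγ A))
    _ ≤ c * ν A := by
        rw [measure_sdiff (subset_finSMul hS A) hA hνA, tsub_le_iff_left, ← one_add_mul]
        exact h

theorem MeasClassPres.map_smul_absolutelyContinuous [MeasurableConstSMul Γ X]
    (h : MeasClassPres Γ ν) (γ : Γ) : ν.map (γ • ·) ≪ ν :=
  Measure.AbsolutelyContinuous.mk fun s hs hνs => by
    rw [Measure.map_apply (measurable_const_smul γ) hs, preimage_smul]
    exact (h γ⁻¹ s hs).2 hνs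

theorem MeasClassPres.tendsto_measure_smul [MeasurableConstSMul Γ X] [IsFiniteMeasure ν]
    (h : MeasClassPres Γ ν) (γ : Γ) {ι : Type*} {l : Filter ι} {s : ι → Set X}
    (hs : Tendsto (ν ∘ s) l (𝓝 0)) : Tendsto (fun i => ν (γ • s i)) l (𝓝 0) := by
  refine tendsto_of_tendsto_of_tendsto_of_le_of_le tendsto_const_nhds
    ((h.map_smul_absolutelyContinuous γ⁻¹).tendsto_measure_nhds_zero hs) (fun _ => zero_le)
    fun i => ?_
  rw [Function.comp_apply, ← preimage_smul_inv]
  exact Measure.le_map_apply (measurable_const_smul (α := X) γ⁻¹).aemeasurable _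

theorem MeasClassPres.tendsto_measure_symmDiff_smul [MeasurableConstSMul Γ X]
    [IsFiniteMeasure ν] (h : MeasClassPres Γ ν) {ι : Type*} {l : Filter ι} {C : ι → Set X}
    (hC : ∀ γ : Γ, Tendsto (fun i => ν (γ • C i \ C i)) l (𝓝 0)) (γ : Γ) :
    Tendsto (fun i => ν (C i ∆ (γ • C i))) l (𝓝 0) := by
  have hγ : Tendsto (fun i => ν (C i \ γ • C i)) l (𝓝 0) := by
    simpa only [smul_set_sdiff, smul_inv_smul] using h.tendsto_measure_smul γ (hC γ⁻¹)
  refine tendsto_of_tendsto_of_tendsto_of_le_of_le tendsto_const_nhds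
    (by simpa using hγ.add (hC γ)) (fun _ => zero_le) fun i => ?_
  rw [symmDiff_def]
  exact measure_union_le _ _

end Translates

theorem Countable.exists_finset_eventually_mem {α : Type*} [Countable α] (a : α) :
    ∃ S : ℕ → Finset α, (∀ n, a ∈ S n) ∧ ∀ x, ∀ᶠ n in atTop, x ∈ S n := by
  classical
  have : Nonempty α := ⟨a⟩
  obtain ⟨e, he⟩ := exists_surjective_nat α
  refine ⟨fun n => insert a ((Finset.range n).image e), fun n => Finset.mem_insert_self _ _,
    fun x => ?_⟩
  obtain ⟨m, rfl⟩ := he x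
  filter_upwards [eventually_gt_atTop m] with n hn
  exact Finset.mem_insert_of_mem (Finset.mem_image_of_mem e (Finset.mem_range.2 hn))

section Expansion

variable {Γ X : Type*} [Group Γ] [MulAction Γ X] [MeasurableSpace X] {ν : Measure X}
  {α c : ℝ} {S : Finset Γ}

theorem IsExpandingAt.measure_lt (hS : IsExpandingAt ν α c S) {A : Set X}
    (hA : MeasurableSet A) (hA2 : ν A ≤ 1 / 2)
    (hsum : ∑ s ∈ S, ν (A ∆ (s • A)) ≤ ENNReal.ofReal c * ENNReal.ofReal α) :
    ν A < ENNReal.ofReal α := by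
  by_contra! hαA
  refine (hS A hA hαA hA2).not_ge ?_
  calc ν (finSMul S A) ≤ ν A + ν (finSMul S A \ A) := tsub_le_iff_left.1 le_measure_sdiff
    _ ≤ ν A + ENNReal.ofReal c * ν A := by
        gcongr
        exact (measure_finSMul_sdiff_le_sum S A).trans (hsum.trans (by gcongr))
    _ = (1 + ENNReal.ofReal c) * ν A := by ring

theorem IsExpandingAt.measure_mul_measure_compl_lt [IsProbabilityMeasure ν]
    (hS : IsExpandingAt ν α c S) {A : Set X} (hA : MeasurableSet A)
    (hsum : ∑ s ∈ S, ν (A ∆ (s • A)) ≤ ENNReal.ofReal c * ENNReal.ofReal α) :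
    ν A * ν Aᶜ < ENNReal.ofReal α := by
  rcases le_or_gt (ν A) (1 / 2) with hA2 | hA2
  · exact (mul_le_of_le_one_right' prob_le_one).trans_lt (hS.measure_lt hA hA2 hsum)
  · have hAc2 : ν Aᶜ ≤ 1 / 2 := by
      rw [prob_compl_eq_one_sub hA, tsub_le_iff_left]
      calc (1 : ℝ≥0∞) = 1 / 2 + 1 / 2 := (ENNReal.add_halves 1).symm
        _ ≤ ν A + 1 / 2 := by gcongr
    have hsumc : ∑ s ∈ S, ν (Aᶜ ∆ (s • Aᶜ)) = ∑ s ∈ S, ν (A ∆ (s • A)) := by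
      simp only [smul_set_compl, compl_symmDiff_compl]
    exact (mul_le_of_le_one_left' prob_le_one).trans_lt
      (hS.measure_lt hA.compl hAc2 (hsumc ▸ hsum))

theorem stronglyErgodic_of_forall_isExpandingAt [IsProbabilityMeasure ν]
    (h : ∀ α : ℝ, 0 < α → α ≤ 1 / 2 → ∃ c : ℝ, 0 < c ∧ ∃ S : Finset Γ, IsExpandingAt ν α c S) :
    StronglyErgodic Γ ν := by
  intro C hCm hC
  refine ENNReal.tendsto_nhds_zero.2 fun ε hε => ?_
  obtain ⟨r, -, hr, hrε⟩ := ENNReal.lt_iff_exists_real_btwn.1 hε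
  have hα : 0 < min r (1 / 2) := lt_min (ENNReal.ofReal_pos.1 hr) one_half_pos
  obtain ⟨c, hc, S, hS⟩ := h (min r (1 / 2)) hα (min_le_right _ _)
  have hsum : Tendsto (fun n => ∑ s ∈ S, ν (C n ∆ (s • C n))) atTop (𝓝 0) := by
    simpa using tendsto_finsetSum S fun s _ => hC s
  have hcα : 0 < ENNReal.ofReal c * ENNReal.ofReal (min r (1 / 2)) :=
    ENNReal.mul_pos (ENNReal.ofReal_pos.2 hc).ne' (ENNReal.ofReal_pos.2 hα).ne'
  filter_upwards [ENNReal.tendsto_nhds_zero.1 hsum _ hcα] with n hn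
  rw [← prob_compl_eq_one_sub (hCm n)]
  calc ν (C n) * ν (C n)ᶜ ≤ ENNReal.ofReal (min r (1 / 2)) :=
        (hS.measure_mul_measure_compl_lt (hCm n) hn).le
    _ ≤ ENNReal.ofReal r := ENNReal.ofReal_le_ofReal (min_le_left _ _)
    _ ≤ ε := hrε.le

theorem StronglyErgodic.exists_isExpandingAt [Countable Γ] [MeasurableConstSMul Γ X]
    [IsProbabilityMeasure ν] (hmcp : MeasClassPres Γ ν) (hSE : StronglyErgodic Γ ν)
    (hα : 0 < α) : ∃ c : ℝ, 0 < c ∧ ∃ S : Finset Γ, IsExpandingAt ν α c S := by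
  by_contra! hno
  simp only [IsExpandingAt, not_forall, not_lt] at hno
  obtain ⟨S, hS1, hSγ⟩ := Countable.exists_finset_eventually_mem (1 : Γ)
  choose C hCm hCα hC2 hCS using fun n : ℕ => hno (1 / (n + 1)) (by positivity) (S n)
  have hsmall (γ : Γ) : Tendsto (fun n => ν (γ • C n \ C n)) atTop (𝓝 0) := by
    have hc : Tendsto (fun n : ℕ => ENNReal.ofReal (1 / (n + 1))) atTop (𝓝 0) := by
      simpa using ENNReal.tendsto_ofReal tendsto_one_div_add_atTop_nhds_zero_nat
    refine tendsto_of_tendsto_of_tendsto_of_le_of_le' tendsto_const_nhds hc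
      (Eventually.of_forall fun _ => zero_le) ?_
    filter_upwards [hSγ γ] with n hn
    calc ν (γ • C n \ C n) ≤ ENNReal.ofReal (1 / (n + 1)) * ν (C n) :=
          measure_smul_sdiff_le_of_measure_finSMul_le (hS1 n) hn (hCm n).nullMeasurableSet
            (measure_ne_top _ _) (hCS n)
      _ ≤ ENNReal.ofReal (1 / (n + 1)) := mul_le_of_le_one_right' prob_le_one
  have hlower (n : ℕ) : ENNReal.ofReal α * 2⁻¹ ≤ ν (C n) * (1 - ν (C n)) := by
    refine mul_le_mul' (hCα n) ?_
    rw [← ENNReal.one_sub_inv_two, ← one_div]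
    exact tsub_le_tsub_left (hC2 n) 1
  have hpos : 0 < ENNReal.ofReal α * 2⁻¹ :=
    ENNReal.mul_pos (ENNReal.ofReal_pos.2 hα).ne' (ENNReal.inv_ne_zero.2 ENNReal.ofNat_ne_top)
  have hlim := hSE C hCm (hmcp.tendsto_measure_symmDiff_smul hsmall)
  exact hpos.not_ge (ge_of_tendsto' hlim hlower)

end Expansion

/-- Proposition 3.3: a measure-class-preserving action on a probability
space is strongly ergodic iff it is asymptotically expanding in measure. -/
theorem stronglyErgodic_iff_asymptoticallyExpanding
    {Γ X : Type*} [Group Γ] [Countable Γ] [MulAction Γ X] [MeasurableSpace X]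
    (ν : Measure X) [IsProbabilityMeasure ν]
    (hmeas : ∀ γ : Γ, Measurable fun x : X => γ • x)
    (hmcp : MeasClassPres Γ ν) :
    StronglyErgodic Γ ν ↔
      ∀ α : ℝ, 0 < α → α ≤ 1 / 2 → ∃ c : ℝ, 0 < c ∧ ∃ S : Finset Γ,
        ∀ A : Set X, MeasurableSet A → ENNReal.ofReal α ≤ ν A → ν A ≤ 1 / 2 →
          (1 + ENNReal.ofReal c) * ν A < ν (finSMul S A) := by
  have : MeasurableConstSMul Γ X := ⟨hmeas⟩
  exact ⟨fun hSE α hα _ => hSE.exists_isExpandingAt hmcp hα,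
    stronglyErgodic_of_forall_isExpandingAt⟩
end

section
/- Let Γ be a group generated by a finite symmetric subset S with 1 ∈ S, and let ρ : Γ ↷ (X,ν) be a measure-class-preserving measurable action on a probability space. Then ρ is asymptotically expanding in measure if and only if ρ is S-asymptotically expanding in measure, i.e., there exists a function c̄ : (0,1/2] → ℝ_{>0} such that for every α ∈ (0,1/2] and every measurable A ⊆ X with α ≤ ν(A) ≤ 1/2 one has ν(S·A) > (1+c̄(α))·ν(A). -/
open MeasureTheory Set Filter Pointwise

/-! Let `(c, T)` witness asymptotic expansion at level `α`. Since `S` generates `Γ`, `T ⊆ Sⁿ`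
for some `n`, and `Sⁿ·A ⊆ A ∪ Sⁿ·∂_S A` with `∂_S A = S·A \ A`. Measure-class preservation makes
`B ↦ ν(Sⁿ·B)` absolutely continuous with respect to `ν`, so if `ν(S·A) ≤ (1 + δ) ν(A)` with `δ`
small, then `ν(T·A) ≤ ν(Sⁿ·A) < ν(A) + cα`, contradicting the expansion of `A` under `T`. -/

open scoped ENNReal

section Pointwise

variable {G α : Type*}

lemma Set.subset_smul_of_one_mem [Monoid G] [MulAction G α] {s : Set G} (hs : 1 ∈ s)
    (t : Set α) : t ⊆ s • t :=
  calc t = (1 : Set G) • t := (one_smul _ t).symm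
    _ ⊆ s • t := Set.smul_subset_smul (Set.one_subset.2 hs) subset_rfl

lemma Set.pow_smul_subset_union_pow_smul_diff [Monoid G] [MulAction G α] {s : Set G}
    (hs : 1 ∈ s) (t : Set α) : ∀ k : ℕ, s ^ k • t ⊆ t ∪ s ^ k • (s • t \ t)
  | 0 => by simp
  | k + 1 => by
    have hk : 1 ∈ s ^ (k + 1) := Set.one_mem_pow hs
    calc s ^ (k + 1) • t = s • s ^ k • t := by rw [pow_succ', mul_smul]
      _ ⊆ s • (t ∪ s ^ k • (s • t \ t)) :=
          Set.smul_subset_smul subset_rfl (pow_smul_subset_union_pow_smul_diff hs t k)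
      _ = s • t ∪ s ^ (k + 1) • (s • t \ t) := by rw [Set.smul_union, pow_succ', mul_smul]
      _ ⊆ t ∪ s ^ (k + 1) • (s • t \ t) := by
          refine Set.union_subset (fun x hx => ?_) Set.subset_union_right
          by_cases hxt : x ∈ t
          · exact Or.inl hxt
          · exact Or.inr (Set.subset_smul_of_one_mem hk _ ⟨hx, hxt⟩)

lemma Subgroup.iUnion_pow_eq_univ_of_closure_eq_top [Group G] {s : Set G} (hinv : s⁻¹ ⊆ s)
    (hgen : Subgroup.closure s = ⊤) : ⋃ n : ℕ, s ^ n = Set.univ := by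
  refine Set.eq_univ_of_forall fun g => ?_
  have hg : g ∈ Subgroup.closure s := hgen ▸ Subgroup.mem_top g
  induction hg using Subgroup.closure_induction with
  | mem x hx => exact Set.mem_iUnion.2 ⟨1, by simpa using hx⟩
  | one => exact Set.mem_iUnion.2 ⟨0, by simp⟩
  | mul x y _ _ hx hy =>
    obtain ⟨k, hk⟩ := Set.mem_iUnion.1 hx
    obtain ⟨l, hl⟩ := Set.mem_iUnion.1 hy
    exact Set.mem_iUnion.2 ⟨k + l, pow_add s k l ▸ Set.mul_mem_mul hk hl⟩
  | inv x _ hx =>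
    obtain ⟨k, hk⟩ := Set.mem_iUnion.1 hx
    refine Set.mem_iUnion.2 ⟨k, Set.pow_subset_pow_left hinv ?_⟩
    rwa [inv_pow, Set.inv_mem_inv]

lemma Finset.exists_subset_pow_of_closure_eq_top [Group G] [DecidableEq G] {S : Finset G}
    (h1 : 1 ∈ S) (hinv : ∀ s ∈ S, s⁻¹ ∈ S) (hgen : Subgroup.closure (S : Set G) = ⊤)
    (T : Finset G) : ∃ n : ℕ, T ⊆ S ^ n := by
  have hmono : Monotone fun n : ℕ => (S : Set G) ^ n :=
    fun _ _ => Set.pow_subset_pow_right (Finset.mem_coe.2 h1)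
  have hcover : (T : Set G) ⊆ ⋃ n : ℕ, (S : Set G) ^ n := by
    rw [Subgroup.iUnion_pow_eq_univ_of_closure_eq_top
      (fun g hg => by simpa using hinv g⁻¹ (Set.mem_inv.1 hg)) hgen]
    exact Set.subset_univ _
  obtain ⟨n, hn⟩ := hmono.directed_le.exists_mem_subset_of_finset_subset_biUnion hcover
  exact ⟨n, by rwa [← Finset.coe_subset, Finset.coe_pow]⟩

end Pointwise

section FinSMul

variable {Γ X : Type*} [Group Γ] [MulAction Γ X]

lemma finSMul_eq_smul (S : Finset Γ) (A : Set X) : finSMul S A = (S : Set Γ) • A := by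
  rw [finSMul, ← Set.iUnion_smul_set]
  rfl

lemma finSMul_pow_subset_union_finSMul_finBdry [DecidableEq Γ] {S : Finset Γ} (h1 : 1 ∈ S)
    (A : Set X) (k : ℕ) : finSMul (S ^ k) A ⊆ A ∪ finSMul (S ^ k) (finBdry S A) := by
  simp only [finBdry, finSMul_eq_smul, Finset.coe_pow]
  exact Set.pow_smul_subset_union_pow_smul_diff h1 A k

lemma measurableSet_finSMul [MeasurableSpace X] [MeasurableConstSMul Γ X] (S : Finset Γ)
    {A : Set X} (hA : MeasurableSet A) : MeasurableSet (finSMul S A) :=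
  S.measurableSet_biUnion fun s _ => hA.const_smul s

end FinSMul

lemma MeasureTheory.Measure.AbsolutelyContinuous.exists_pos_forall_measure_lt
    {X : Type*} [MeasurableSpace X] {μ ν : Measure X} [IsFiniteMeasure μ] [SigmaFinite ν]
    (hμν : μ ≪ ν) {ε : ℝ≥0∞} (hε : ε ≠ 0) :
    ∃ δ : ℝ, 0 < δ ∧ ∀ s, MeasurableSet s → ν s ≤ ENNReal.ofReal δ → μ s < ε := by
  obtain ⟨δ₀, hδ₀, h⟩ := exists_pos_setLIntegral_lt_of_measure_lt (μ := ν)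
    (Measure.lintegral_rnDeriv_lt_top μ ν).ne hε
  obtain ⟨δ, -, hδ, hδδ₀⟩ := ENNReal.lt_iff_exists_real_btwn.1 hδ₀
  refine ⟨δ, ENNReal.ofReal_pos.1 hδ, fun s hs hsδ => ?_⟩
  rw [← Measure.setLIntegral_rnDeriv hμν]
  exact h s (hsδ.trans_lt hδδ₀)

section MeasureClassPreserving

variable {Γ X : Type*} [Group Γ] [MulAction Γ X] [MeasurableSpace X] [MeasurableConstSMul Γ X]
  {ν : Measure X}

lemma MeasClassPres.exists_pos_forall_measure_finSMul_lt [IsFiniteMeasure ν]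
    (hmcp : MeasClassPres Γ ν) (F : Finset Γ) {ε : ℝ≥0∞} (hε : ε ≠ 0) :
    ∃ δ : ℝ, 0 < δ ∧ ∀ B, MeasurableSet B → ν B ≤ ENNReal.ofReal δ → ν (finSMul F B) < ε := by
  set μ : Measure X := ∑ γ ∈ F, ν.map (γ⁻¹ • ·)
  have hμ : ∀ B, MeasurableSet B → μ B = ∑ γ ∈ F, ν (γ • B) := fun B hB => by
    rw [Measure.finsetSum_apply]
    refine Finset.sum_congr rfl fun γ _ => ?_
    rw [Measure.map_apply (measurable_const_smul _) hB, Set.preimage_smul, inv_inv]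
  have hμν : μ ≪ ν := Measure.AbsolutelyContinuous.mk fun B hB hB0 => by
    rw [hμ B hB]
    exact Finset.sum_eq_zero fun γ _ => (hmcp γ B hB).2 hB0
  obtain ⟨δ, hδ, h⟩ := hμν.exists_pos_forall_measure_lt hε
  refine ⟨δ, hδ, fun B hB hBδ => ?_⟩
  calc ν (finSMul F B) ≤ ∑ γ ∈ F, ν (γ • B) := measure_biUnion_finset_le F _
    _ = μ B := (hμ B hB).symm
    _ < ε := h B hB hBδ

end MeasureClassPreserving

section Boundary

variable {Γ X : Type*} [Group Γ] [MulAction Γ X] [MeasurableSpace X] {ν : Measure X}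
  {S : Finset Γ} {A : Set X}

lemma measure_finBdry_le_of_measure_finSMul_le (h1 : 1 ∈ S) (hA : NullMeasurableSet A ν)
    (hfin : ν A ≠ ∞) {a : ℝ≥0∞} (h : ν (finSMul S A) ≤ (1 + a) * ν A) :
    ν (finBdry S A) ≤ a * ν A := by
  have hsub : A ⊆ finSMul S A := by
    rw [finSMul_eq_smul]
    exact Set.subset_smul_of_one_mem (Finset.mem_coe.2 h1) A
  rw [finBdry, measure_sdiff hsub hA hfin, tsub_le_iff_right]
  simpa [add_mul, add_comm] using h

lemma measure_finSMul_lt_of_measure_finSMul_pow_finBdry_lt [DecidableEq Γ] (h1 : 1 ∈ S)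
    {T : Finset Γ} {n : ℕ} (hT : T ⊆ S ^ n) (hfin : ν A ≠ ∞) {a : ℝ≥0∞}
    (h : ν (finSMul (S ^ n) (finBdry S A)) < a * ν A) :
    ν (finSMul T A) < (1 + a) * ν A :=
  calc ν (finSMul T A) ≤ ν (finSMul (S ^ n) A) := by
        simp only [finSMul_eq_smul]
        exact measure_mono (Set.smul_subset_smul (Finset.coe_subset.2 hT) subset_rfl)
    _ ≤ ν A + ν (finSMul (S ^ n) (finBdry S A)) :=
        (measure_mono (finSMul_pow_subset_union_finSMul_finBdry h1 A n)).trans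
          (measure_union_le _ _)
    _ < ν A + a * ν A := ENNReal.add_lt_add_left hfin h
    _ = (1 + a) * ν A := by ring

end Boundary

theorem asymptoticallyExpanding_iff_S_asymptoticallyExpanding_general
    {Γ X : Type*} [Group Γ] [MulAction Γ X] [MeasurableSpace X]
    (ν : Measure X) [IsProbabilityMeasure ν]
    (hmeas : ∀ γ : Γ, Measurable fun x : X => γ • x)
    (hmcp : MeasClassPres Γ ν)
    (S : Finset Γ) (hS : SymmFin S) (hgen : Subgroup.closure (S : Set Γ) = ⊤) :
    AsymExpDomain Γ ν Set.univ ↔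
      ∀ α : ℝ, 0 < α → α ≤ 1 / 2 →
        ∃ c : ℝ, 0 < c ∧ AsymExpandsOn ν Set.univ α c S := by
  refine ⟨fun hdom α hα hα2 => ?_, fun h α hα hα2 => ?_⟩
  · classical
    have : MeasurableConstSMul Γ X := ⟨hmeas⟩
    obtain ⟨c, hc, T, -, hT⟩ := hdom α hα hα2
    obtain ⟨n, hTn⟩ := Finset.exists_subset_pow_of_closure_eq_top hS.1 hS.2 hgen T
    obtain ⟨δ, hδ, hsmall⟩ := hmcp.exists_pos_forall_measure_finSMul_lt (S ^ n)
      (ENNReal.ofReal_pos.2 (mul_pos hc hα)).ne'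
    refine ⟨δ, hδ, fun A hA _ hαA hA2 => ?_⟩
    by_contra! hSA
    rw [Set.inter_univ] at hSA
    have hbdry : ν (finBdry S A) ≤ ENNReal.ofReal δ :=
      (measure_finBdry_le_of_measure_finSMul_le hS.1 hA.nullMeasurableSet (measure_ne_top ν A)
        hSA).trans (mul_le_of_le_one_right' prob_le_one)
    have hcA : ENNReal.ofReal (c * α) ≤ ENNReal.ofReal c * ν A := by
      rw [ENNReal.ofReal_mul hc.le]
      gcongr
      simpa using hαA
    have hTA := measure_finSMul_lt_of_measure_finSMul_pow_finBdry_lt hS.1 hTn (measure_ne_top ν A)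
      ((hsmall _ ((measurableSet_finSMul S hA).diff hA) hbdry).trans_le hcA)
    exact (hT A hA (Set.subset_univ A) hαA hA2).not_ge (by simpa using hTA.le)
  · obtain ⟨c, hc, hSexp⟩ := h α hα hα2
    exact ⟨c, hc, S, hS, hSexp⟩

/-- Lemma 3.13: for a measure-class-preserving action of a group
generated by a finite symmetric set `S ∋ 1` on a probability space, asymptotic expansion
in measure is equivalent to `S`-asymptotic expansion in measure. -/
theorem asymptoticallyExpanding_iff_S_asymptoticallyExpanding
    {Γ X : Type*} [Group Γ] [Countable Γ] [MulAction Γ X] [MeasurableSpace X]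
    (ν : Measure X) [IsProbabilityMeasure ν]
    (hmeas : ∀ γ : Γ, Measurable fun x : X => γ • x)
    (hmcp : MeasClassPres Γ ν)
    (S : Finset Γ) (hS : SymmFin S) (hgen : Subgroup.closure (S : Set Γ) = ⊤) :
    AsymExpDomain Γ ν Set.univ ↔
      ∀ α : ℝ, 0 < α → α ≤ 1 / 2 →
        ∃ c : ℝ, 0 < c ∧ AsymExpandsOn ν Set.univ α c S :=
  asymptoticallyExpanding_iff_S_asymptoticallyExpanding_general ν hmeas hmcp S hS hgen
end

section
/- Let Γ be a countable discrete group with a measurable action on a measure space (X,ν), let Y ⊆ X be a domain, let Z ⊆ Y be a measurable subset, let ε > 0, and let S ⊆ Γ be a finite symmetric subset with 1 ∈ S. Consider the family F := { F ⊆ Y ∖ Z measurable : ν(F) ≤ ν(Y)/2 and ν((∂_S F ∩ Y) ∖ Z) ≤ ε·ν(F) } of (ε,S)-Følner sets in Y relative to Z. Then F contains a maximal element up to null sets: there exists F ∈ F such that every F' ∈ F with ν(F ∖ F') = 0 satisfies ν(F' ∖ F) = 0. -/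
open MeasureTheory Set Filter Pointwise

open scoped ENNReal

/-! The `(ε,S)`-Følner sets relative to `Z` have measure at most `ν Y / 2 < ∞`, and they are
closed under removing null sets and under increasing unions (the boundary of an increasing union
is the increasing union of the sets `S·B n \ ⋃ B`, each contained in `∂_S (B n)`). So one builds
a sequence of Følner sets `A n`, each a.e. contained in the next, with `A (n+1)` within `1/n` of
the supremum of the measures of Følner sets a.e. containing `A n`. Removing the null set
`⋃ n, A n \ A (n+1)` makes the sequence increasing; its union `F` is Følner, and any Følner set
a.e. containing `F` has measure at most `ν F < ∞`, hence differs from `F` by a null set. -/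

lemma exists_mem_forall_le_add {α : Type*} (f : α → ℝ≥0∞) {s : Set α} (hs : s.Nonempty)
    {C : ℝ≥0∞} (hC : C ≠ ∞) (hbdd : ∀ a ∈ s, f a ≤ C) {δ : ℝ≥0∞} (hδ : δ ≠ 0) :
    ∃ b ∈ s, ∀ a ∈ s, f a ≤ f b + δ := by
  set t := ⨆ a ∈ s, f a
  have hle : ∀ a ∈ s, f a ≤ t := fun a ha => le_biSup f ha
  by_cases htδ : t ≤ δ
  · obtain ⟨b, hb⟩ := hs
    exact ⟨b, hb, fun a ha => (hle a ha).trans (htδ.trans le_add_self)⟩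
  · have htfin : t ≠ ∞ := ne_top_of_le_ne_top hC (iSup₂_le hbdd)
    have hlt : t - δ < t := ENNReal.sub_lt_self htfin (pos_of_gt (not_le.mp htδ)).ne' hδ
    obtain ⟨b, hb, htb⟩ := lt_biSup_iff.mp hlt
    exact ⟨b, hb, fun a ha => (hle a ha).trans (tsub_le_iff_right.mp htb.le)⟩

lemma monotone_sdiff_iUnion_sdiff_succ {α : Type*} (A : ℕ → Set α) :
    Monotone fun n => A n \ ⋃ k, (A k \ A (k + 1)) := by
  refine monotone_nat_of_le_succ fun n x ⟨hxA, hxM⟩ => ⟨?_, hxM⟩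
  by_contra hx
  exact hxM (mem_iUnion.mpr ⟨n, hxA, hx⟩)

section AeMaximal

variable {X : Type*} [MeasurableSpace X] (ν : Measure X) {P : Set X → Prop} {C : ℝ≥0∞}

lemma exists_seq_ae_mono_near_sup (hC : C ≠ ∞) (hbdd : ∀ F, P F → ν F ≤ C) {F₀ : Set X}
    (hF₀ : P F₀) :
    ∃ A : ℕ → Set X, (∀ n, P (A n)) ∧ (∀ n, ν (A n \ A (n + 1)) = 0) ∧
      ∀ n F, P F → ν (A n \ F) = 0 → ν F ≤ ν (A (n + 1)) + (n : ℝ≥0∞)⁻¹ := by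
  have step : ∀ (n : ℕ) (A : {F // P F}), ∃ G : {F // P F}, ν (A.1 \ G.1) = 0 ∧
      ∀ F, P F → ν (A.1 \ F) = 0 → ν F ≤ ν G.1 + (n : ℝ≥0∞)⁻¹ := by
    intro n A
    obtain ⟨G, ⟨hG, hAG⟩, hGmax⟩ :=
      exists_mem_forall_le_add ν (s := {F | P F ∧ ν (A.1 \ F) = 0}) ⟨A.1, A.2, by simp⟩ hC
        (fun F hF => hbdd F hF.1) (ENNReal.inv_ne_zero.mpr (ENNReal.natCast_ne_top n))
    exact ⟨⟨G, hG⟩, hAG, fun F hF hAF => hGmax F ⟨hF, hAF⟩⟩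
  choose g hg using step
  let A : ℕ → {F // P F} := fun n => Nat.rec ⟨F₀, hF₀⟩ g n
  exact ⟨fun n => (A n).1, fun n => (A n).2, fun n => (hg n (A n)).1, fun n => (hg n (A n)).2⟩

theorem exists_ae_maximal_of_iUnion_mem (hC : C ≠ ∞) (hbdd : ∀ F, P F → ν F ≤ C)
    (hmeas : ∀ F, P F → MeasurableSet F)
    (hsdiff : ∀ F N, P F → MeasurableSet N → ν N = 0 → P (F \ N))
    (hiUnion : ∀ B : ℕ → Set X, Monotone B → (∀ n, P (B n)) → P (⋃ n, B n))
    {F₀ : Set X} (hF₀ : P F₀) :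
    ∃ F, P F ∧ ∀ F', P F' → ν (F \ F') = 0 → ν (F' \ F) = 0 := by
  obtain ⟨A, hPA, hAnull, hAsup⟩ := exists_seq_ae_mono_near_sup ν hC hbdd hF₀
  set M := ⋃ k, (A k \ A (k + 1))
  have hMnull : ν M = 0 := measure_iUnion_null hAnull
  have hPB : ∀ n, P (A n \ M) := fun n =>
    hsdiff _ _ (hPA n) (.iUnion fun k => (hmeas _ (hPA k)).diff (hmeas _ (hPA (k + 1)))) hMnull
  have hPF : P (⋃ n, A n \ M) := hiUnion _ (monotone_sdiff_iUnion_sdiff_succ A) hPB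
  refine ⟨_, hPF, fun F' hF' hF'null => ?_⟩
  set F := ⋃ n, A n \ M
  have hAF' : ∀ n, ν (A n \ F') = 0 := fun n =>
    measure_mono_null (fun x ⟨hxA, hxF'⟩ => by_cases (fun hxM : x ∈ M => Or.inl hxM)
      fun hxM => Or.inr ⟨mem_iUnion.mpr ⟨n, hxA, hxM⟩, hxF'⟩)
      (measure_union_null hMnull hF'null)
  have hF'le : ν F' ≤ ν F := by
    refine ENNReal.le_of_forall_pos_le_add fun δ hδ _ => ?_
    obtain ⟨n, hn⟩ := ENNReal.exists_inv_nat_lt (ENNReal.coe_ne_zero.mpr hδ.ne')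
    calc ν F' ≤ ν (A (n + 1)) + (n : ℝ≥0∞)⁻¹ := hAsup n F' hF' (hAF' n)
      _ = ν (A (n + 1) \ M) + (n : ℝ≥0∞)⁻¹ := by rw [measure_sdiff_null hMnull]
      _ ≤ ν F + δ := add_le_add (measure_mono (subset_iUnion (fun n => A n \ M) _)) hn.le
  have hFF' : F =ᵐ[ν] F' := ae_eq_of_ae_subset_of_measure_ge (ae_le_set.mpr hF'null) hF'le
    (hmeas F hPF).nullMeasurableSet (ne_top_of_le_ne_top hC (hbdd F' hF'))
  exact (ae_eq_set.mp hFF').2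

end AeMaximal

section Foelner

variable {Γ X : Type*} [Group Γ] [MulAction Γ X]

@[gcongr]
lemma finSMul_mono (S : Finset Γ) {A B : Set X} (h : A ⊆ B) : finSMul S A ⊆ finSMul S B :=
  iUnion₂_mono fun _ _ => smul_set_mono h

lemma finSMul_iUnion {ι : Sort*} (S : Finset Γ) (A : ι → Set X) :
    finSMul S (⋃ i, A i) = ⋃ i, finSMul S (A i) := by
  simp only [finSMul, smul_set_iUnion]
  exact (iUnion_congr fun _ => iUnion_comm _).trans (iUnion_comm _)

@[simp]
lemma finBdry_empty (S : Finset Γ) : finBdry S (∅ : Set X) = ∅ := by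
  simp [finBdry, finSMul]

lemma finBdry_iUnion {ι : Sort*} (S : Finset Γ) (A : ι → Set X) :
    finBdry S (⋃ i, A i) = ⋃ i, finSMul S (A i) \ ⋃ j, A j := by
  rw [finBdry, finSMul_iUnion, iUnion_sdiff]

lemma finBdry_sdiff_subset (S : Finset Γ) (A N : Set X) :
    finBdry S (A \ N) ⊆ finBdry S A ∪ N := fun x ⟨hxS, hxA⟩ =>
  by_cases (fun hxN : x ∈ N => Or.inr hxN)
    fun hxN => Or.inl ⟨finSMul_mono S sdiff_subset hxS, fun hx => hxA ⟨hx, hxN⟩⟩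

variable [MeasurableSpace X]

def IsRelFoelner (ν : Measure X) (Y Z : Set X) (c : ℝ≥0∞) (S : Finset Γ) (F : Set X) :
    Prop :=
  MeasurableSet F ∧ F ⊆ Y \ Z ∧ ν F ≤ ν Y / 2 ∧ ν ((finBdry S F ∩ Y) \ Z) ≤ c * ν F

namespace IsRelFoelner

variable {ν : Measure X} {Y Z : Set X} {c : ℝ≥0∞} {S : Finset Γ}

lemma empty : IsRelFoelner ν Y Z c S ∅ := by
  simp [IsRelFoelner]

lemma sdiff_null {F N : Set X} (hF : IsRelFoelner ν Y Z c S F) (hNm : MeasurableSet N)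
    (hN : ν N = 0) : IsRelFoelner ν Y Z c S (F \ N) := by
  obtain ⟨hFm, hFsub, hFhalf, hFbdry⟩ := hF
  refine ⟨hFm.diff hNm, sdiff_subset.trans hFsub, (measure_sdiff_null hN).trans_le hFhalf, ?_⟩
  have hsub : (finBdry S (F \ N) ∩ Y) \ Z ⊆ ((finBdry S F ∩ Y) \ Z) ∪ N := by
    intro x ⟨⟨hxB, hxY⟩, hxZ⟩
    rcases finBdry_sdiff_subset S F N hxB with hx | hx
    exacts [Or.inl ⟨⟨hx, hxY⟩, hxZ⟩, Or.inr hx]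
  calc ν ((finBdry S (F \ N) ∩ Y) \ Z)
      ≤ ν (((finBdry S F ∩ Y) \ Z) ∪ N) := measure_mono hsub
    _ ≤ ν ((finBdry S F ∩ Y) \ Z) + ν N := measure_union_le _ _
    _ ≤ c * ν (F \ N) := by rwa [hN, add_zero, measure_sdiff_null hN]

lemma iUnion_of_monotone {B : ℕ → Set X} (hB : Monotone B)
    (hPB : ∀ n, IsRelFoelner ν Y Z c S (B n)) :
    IsRelFoelner ν Y Z c S (⋃ n, B n) := by
  refine ⟨.iUnion fun n => (hPB n).1, iUnion_subset fun n => (hPB n).2.1, ?_, ?_⟩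
  · rw [hB.measure_iUnion]
    exact iSup_le fun n => (hPB n).2.2.1
  · set F := ⋃ n, B n
    have hmono : Monotone fun n => ((finSMul S (B n) \ F) ∩ Y) \ Z := fun m n hmn => by
      dsimp only
      gcongr
      exact hB hmn
    calc ν ((finBdry S F ∩ Y) \ Z) = ν (⋃ n, ((finSMul S (B n) \ F) ∩ Y) \ Z) := by
          rw [finBdry_iUnion, iUnion_inter, iUnion_sdiff]
      _ = ⨆ n, ν (((finSMul S (B n) \ F) ∩ Y) \ Z) := hmono.measure_iUnion
      _ ≤ ⨆ n, c * ν (B n) := by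
          gcongr with n
          refine le_trans (measure_mono ?_) (hPB n).2.2.2
          gcongr
          exact sdiff_subset_sdiff_right (subset_iUnion B n)
      _ ≤ c * ν F := iSup_le fun n => by gcongr; exact subset_iUnion B n

end IsRelFoelner

end Foelner

theorem exists_maximal_foelner_general
    {Γ X : Type*} [Group Γ] [MulAction Γ X] [MeasurableSpace X]
    (ν : Measure X)
    (Y : Set X) (hYfin : ν Y < ⊤)
    (Z : Set X)
    (ε : ℝ) (S : Finset Γ) :
    ∃ F : Set X, MeasurableSet F ∧ F ⊆ Y \ Z ∧ ν F ≤ ν Y / 2 ∧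
      ν ((finBdry S F ∩ Y) \ Z) ≤ ENNReal.ofReal ε * ν F ∧
      ∀ F' : Set X, MeasurableSet F' → F' ⊆ Y \ Z → ν F' ≤ ν Y / 2 →
        ν ((finBdry S F' ∩ Y) \ Z) ≤ ENNReal.ofReal ε * ν F' →
        ν (F \ F') = 0 → ν (F' \ F) = 0 := by
  obtain ⟨F, ⟨hFm, hFsub, hFhalf, hFbdry⟩, hFmax⟩ :=
    exists_ae_maximal_of_iUnion_mem ν (ENNReal.div_lt_top hYfin.ne two_ne_zero).ne
      (fun _ hF => hF.2.2.1) (fun _ hF => hF.1) (fun _ _ hF hNm hN => hF.sdiff_null hNm hN)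
      (fun _ hB hPB => IsRelFoelner.iUnion_of_monotone hB hPB)
      (IsRelFoelner.empty (ν := ν) (Y := Y) (Z := Z) (c := ENNReal.ofReal ε) (S := S))
  exact ⟨F, hFm, hFsub, hFhalf, hFbdry, fun F' hF'm hF'sub hF'half hF'bdry =>
    hFmax F' ⟨hF'm, hF'sub, hF'half, hF'bdry⟩⟩

/-- Lemma 4.2: the family of `(ε,S)`-Følner sets in `Y` relative to `Z`
contains a maximal element up to null sets. -/
theorem exists_maximal_foelner
    {Γ X : Type*} [Group Γ] [Countable Γ] [MulAction Γ X] [MeasurableSpace X]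
    (ν : Measure X)
    (hmeas : ∀ γ : Γ, Measurable fun x : X => γ • x)
    (Y : Set X) (hYm : MeasurableSet Y) (hY0 : 0 < ν Y) (hYfin : ν Y < ⊤)
    (Z : Set X) (hZm : MeasurableSet Z) (hZsub : Z ⊆ Y)
    (ε : ℝ) (hε : 0 < ε) (S : Finset Γ) (hS : SymmFin S) :
    ∃ F : Set X, MeasurableSet F ∧ F ⊆ Y \ Z ∧ ν F ≤ ν Y / 2 ∧
      ν ((finBdry S F ∩ Y) \ Z) ≤ ENNReal.ofReal ε * ν F ∧
      ∀ F' : Set X, MeasurableSet F' → F' ⊆ Y \ Z → ν F' ≤ ν Y / 2 →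
        ν ((finBdry S F' ∩ Y) \ Z) ≤ ENNReal.ofReal ε * ν F' →
        ν (F \ F') = 0 → ν (F' \ F) = 0 :=
  exists_maximal_foelner_general ν Y hYfin Z ε S
end

section
/- Let Γ be a countable discrete group with a measurable action on a measure space (X,ν), let Y ⊆ X be a domain, let Z ⊆ Y be a measurable subset, let ε ∈ (0,1), and let S ⊆ Γ be a finite symmetric subset with 1 ∈ S. Suppose F ⊆ Y ∖ Z is a maximal (ε,S)-Følner set in Y relative to Z. Then for every measurable subset A ⊆ Y ∖ (F ∪ Z) with 0 < ν(A) ≤ ν(Y)/2 − ν(F), one has ν((∂_S A ∩ Y) ∖ (F ∪ Z)) > ε·ν(A). -/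
/-!
If `A` had small relative boundary outside `F ∪ Z`, then `F ∪ A` would again be an
`(ε,S)`-Følner set: its boundary is covered by the boundary of `F` together with the part of the
boundary of `A` lying outside `F`, and measures add on the disjoint union `F ∪ A`. Maximality of
`F` then forces `ν A = 0`.
-/

open MeasureTheory Set Filter Pointwise

section Boundary

variable {Γ X : Type*} [Group Γ] [MulAction Γ X]

theorem finSMul_union (S : Finset Γ) (A B : Set X) :
    finSMul S (A ∪ B) = finSMul S A ∪ finSMul S B := by
  simp only [finSMul, smul_set_union, ← iUnion_union_distrib]

theorem finBdry_union_subset (S : Finset Γ) (A B : Set X) :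
    finBdry S (A ∪ B) ⊆ finBdry S A ∪ (finBdry S B \ A) := by
  rintro x ⟨hx, hxAB⟩
  rw [finSMul_union] at hx
  rw [mem_union, not_or] at hxAB
  rcases hx with hx | hx
  · exact Or.inl ⟨hx, hxAB.1⟩
  · exact Or.inr ⟨⟨hx, hxAB.2⟩, hxAB.1⟩

theorem relBdry_union_subset (S : Finset Γ) (A B Y Z : Set X) :
    (finBdry S (A ∪ B) ∩ Y) \ Z ⊆ ((finBdry S A ∩ Y) \ Z) ∪ ((finBdry S B ∩ Y) \ (A ∪ Z)) := by
  rintro x ⟨⟨hx, hxY⟩, hxZ⟩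
  rcases finBdry_union_subset S A B hx with hxA | ⟨hxB, hxnA⟩
  · exact Or.inl ⟨⟨hxA, hxY⟩, hxZ⟩
  · exact Or.inr ⟨⟨hxB, hxY⟩, fun h => h.elim hxnA hxZ⟩

theorem measure_relBdry_union_le [MeasurableSpace X] (ν : Measure X) (S : Finset Γ)
    {A B Y Z : Set X} (hAB : Disjoint A B) (hBm : MeasurableSet B) {c : ENNReal}
    (hA : ν ((finBdry S A ∩ Y) \ Z) ≤ c * ν A)
    (hB : ν ((finBdry S B ∩ Y) \ (A ∪ Z)) ≤ c * ν B) :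
    ν ((finBdry S (A ∪ B) ∩ Y) \ Z) ≤ c * ν (A ∪ B) :=
  calc ν ((finBdry S (A ∪ B) ∩ Y) \ Z)
      ≤ ν ((finBdry S A ∩ Y) \ Z) + ν ((finBdry S B ∩ Y) \ (A ∪ Z)) :=
        (measure_mono (relBdry_union_subset S A B Y Z)).trans (measure_union_le _ _)
    _ ≤ c * ν A + c * ν B := add_le_add hA hB
    _ = c * ν (A ∪ B) := by rw [measure_union hAB hBm, mul_add]

end Boundary

theorem complement_of_maximal_foelner_expands_general
    {Γ X : Type*} [Group Γ] [MulAction Γ X] [MeasurableSpace X]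
    (ν : Measure X)
    (Y : Set X) (Z : Set X) (ε : ℝ) (S : Finset Γ)
    (F : Set X) (hFm : MeasurableSet F) (hFsub : F ⊆ Y \ Z) (hFhalf : ν F ≤ ν Y / 2)
    (hFfol : ν ((finBdry S F ∩ Y) \ Z) ≤ ENNReal.ofReal ε * ν F)
    (hFmax : ∀ F' : Set X, MeasurableSet F' → F' ⊆ Y \ Z → ν F' ≤ ν Y / 2 →
      ν ((finBdry S F' ∩ Y) \ Z) ≤ ENNReal.ofReal ε * ν F' →
      ν (F \ F') = 0 → ν (F' \ F) = 0) :
    ∀ A : Set X, MeasurableSet A → A ⊆ Y \ (F ∪ Z) → 0 < ν A →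
      ν A ≤ ν Y / 2 - ν F →
      ENNReal.ofReal ε * ν A < ν ((finBdry S A ∩ Y) \ (F ∪ Z)) := by
  intro A hAm hAsub hA0 hAle
  by_contra! hA
  have hFA : Disjoint F A := disjoint_left.mpr fun x hxF hxA => (hAsub hxA).2 (Or.inl hxF)
  have hsub : F ∪ A ⊆ Y \ Z :=
    union_subset hFsub fun x hx => ⟨(hAsub hx).1, fun hz => (hAsub hx).2 (Or.inr hz)⟩
  have hhalf : ν (F ∪ A) ≤ ν Y / 2 := by
    rw [measure_union hFA hAm]
    exact add_le_of_le_tsub_left_of_le hFhalf hAle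
  have hnull : ν ((F ∪ A) \ F) = 0 :=
    hFmax (F ∪ A) (hFm.union hAm) hsub hhalf (measure_relBdry_union_le ν S hFA hAm hFfol hA)
      (by rw [sdiff_eq_empty.mpr subset_union_left, measure_empty])
  rw [union_sdiff_cancel_left (disjoint_iff_inter_eq_empty.mp hFA).subset] at hnull
  exact hA0.ne' hnull

/-- Lemma 4.4: the complement of a maximal `(ε,S)`-Følner set expands. -/
theorem complement_of_maximal_foelner_expands
    {Γ X : Type*} [Group Γ] [Countable Γ] [MulAction Γ X] [MeasurableSpace X]
    (ν : Measure X)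
    (hmeas : ∀ γ : Γ, Measurable fun x : X => γ • x)
    (Y : Set X) (hYm : MeasurableSet Y) (hY0 : 0 < ν Y) (hYfin : ν Y < ⊤)
    (Z : Set X) (hZm : MeasurableSet Z) (hZsub : Z ⊆ Y)
    (ε : ℝ) (hε0 : 0 < ε) (hε1 : ε < 1) (S : Finset Γ) (hS : SymmFin S)
    (F : Set X) (hFm : MeasurableSet F) (hFsub : F ⊆ Y \ Z) (hFhalf : ν F ≤ ν Y / 2)
    (hFfol : ν ((finBdry S F ∩ Y) \ Z) ≤ ENNReal.ofReal ε * ν F)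
    (hFmax : ∀ F' : Set X, MeasurableSet F' → F' ⊆ Y \ Z → ν F' ≤ ν Y / 2 →
      ν ((finBdry S F' ∩ Y) \ Z) ≤ ENNReal.ofReal ε * ν F' →
      ν (F \ F') = 0 → ν (F' \ F) = 0) :
    ∀ A : Set X, MeasurableSet A → A ⊆ Y \ (F ∪ Z) → 0 < ν A →
      ν A ≤ ν Y / 2 - ν F →
      ENNReal.ofReal ε * ν A < ν ((finBdry S A ∩ Y) \ (F ∪ Z)) :=
  complement_of_maximal_foelner_expands_general ν Y Z ε S F hFm hFsub hFhalf hFfol hFmax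
end
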